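/- Let Δ be a modulus of arity k with values in [0,1] on [0,1]^k, and let D_Δ be the lattice generated by the functions u_{a,b}^{x̄,ȳ} with rational parameters x̄, ȳ ∈ (ℚ ∩ [0,1])^k and a, b ∈ ℚ ∩ [0,1] (satisfying a ≤ b < a + Δ(π(ȳ−x̄)) when Δ(π(ȳ−x̄))>0, and constants a when Δ(π(ȳ−x̄))=0). Then D_Δ is countable and every function u : [0,1]^k → [0,1] respecting Δ is a uniform limit of functions from D_Δ. -/

import Mathlib

/-- The box `[0,1]^k`. -/
def unitBox (k : ℕ) : Set (Fin k → ℝ) := {z | ∀ i, z i ∈ Set.Icc (0 : ℝ) 1}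

/-- The lattice (under pointwise min and max) generated by a set of functions. -/
def latticeGen {k : ℕ} (A : Set ((Fin k → ℝ) → ℝ)) : Set ((Fin k → ℝ) → ℝ) :=
  ⋂₀ {S | A ⊆ S ∧ ∀ f ∈ S, ∀ g ∈ S,
      (fun z => min (f z) (g z)) ∈ S ∧ (fun z => max (f z) (g z)) ∈ S}

/-- The generating family of basic piecewise functions (rational parameters). -/
def genSetQ {k : ℕ} (Δ : (Fin k → ℝ) → ℝ) : Set ((Fin k → ℝ) → ℝ) :=
  {u | (∃ x ∈ unitBox k, ∃ y ∈ unitBox k, ∃ a b : ℝ, (∀ i, ∃ p : ℚ, x i = (p : ℝ)) ∧ (∀ i, ∃ p : ℚ, y i = (p : ℝ)) ∧ (∃ p : ℚ, a = (p : ℝ)) ∧ (∃ p : ℚ, b = (p : ℝ)) ∧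
        a ∈ Set.Icc (0 : ℝ) 1 ∧ b ∈ Set.Icc (0 : ℝ) 1 ∧ a ≤ b ∧
        0 < Δ (fun i => |y i - x i|) ∧ b < a + Δ (fun i => |y i - x i|) ∧
        u = fun z => min 1 (a + ((b - a) / Δ (fun i => |y i - x i|)) *
          Δ (fun i => |z i - x i|))) ∨
      (∃ a : ℝ, a ∈ Set.Icc (0 : ℝ) 1 ∧ (∃ p : ℚ, a = (p : ℝ)) ∧ u = fun _ => a)}

open Set Filter Topology Pointwise

/-! The generated lattice is countable because the generators are indexed by rational data
and a distributive lattice generated by a countable set is countable.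

For the approximation, two-point interpolation plus compactness (the Kakutani–Krein argument)
reduces everything to the following: given `x̄, ȳ` in the box and values `s, t ∈ [0,1]` with
`|t - s| ≤ Δ(π(ȳ - x̄))`, some generator is `ε`-close to `s` at `x̄` and to `t` at `ȳ`.
Each `u_{a,b}^{x̄,ȳ}` with `a ≤ b ≤ a + Δ(π(ȳ - x̄))` takes the values `a, b` at `x̄, ȳ` and
itself respects `Δ`, so moving `x̄, ȳ, a, b` to nearby rationals changes the two values only
by the `Δ`-distance of the moves plus the changes of `a, b`. -/

theorem Set.Countable.supClosure {α : Type*} [SemilatticeSup α] {s : Set α}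
    (hs : s.Countable) : (supClosure s).Countable := by
  refine ((countable_ofPred_finite_subset hs).biUnion
    fun t ht => ht.1.supClosure.countable).mono ?_
  rintro _ ⟨t, ht, hts, rfl⟩
  exact mem_biUnion ⟨t.finite_toSet, hts⟩ (finsetSup'_mem_supClosure ht fun _ hi => hi)

theorem Set.Countable.infClosure {α : Type*} [SemilatticeInf α] {s : Set α}
    (hs : s.Countable) : (infClosure s).Countable := by
  refine ((countable_ofPred_finite_subset hs).biUnion
    fun t ht => ht.1.infClosure.countable).mono ?_
  rintro _ ⟨t, ht, hts, rfl⟩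
  exact mem_biUnion ⟨t.finite_toSet, hts⟩ (finsetInf'_mem_infClosure ht fun _ hi => hi)

theorem Set.Countable.latticeClosure {α : Type*} [DistribLattice α] {s : Set α}
    (hs : s.Countable) : (latticeClosure s).Countable := by
  rw [← supClosure_infClosure]
  exact hs.infClosure.supClosure

theorem latticeGen_eq_latticeClosure {k : ℕ} (A : Set ((Fin k → ℝ) → ℝ)) :
    latticeGen A = latticeClosure A := by
  refine subset_antisymm (sInter_subset_of_mem ⟨subset_latticeClosure, fun f hf g hg =>
    ⟨isSublattice_latticeClosure.infClosed hf hg,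
      isSublattice_latticeClosure.supClosed hf hg⟩⟩) ?_
  refine latticeClosure_min (fun f hf S hS => hS.1 hf) ⟨?_, ?_⟩ <;> intro f hf g hg S hS
  · exact (hS.2 f (hf S hS) g (hg S hS)).2
  · exact (hS.2 f (hf S hS) g (hg S hS)).1

theorem continuous_of_mem_latticeClosure {X : Type*} [TopologicalSpace X] {A : Set (X → ℝ)}
    (hA : ∀ f ∈ A, Continuous f) {f : X → ℝ} (hf : f ∈ latticeClosure A) : Continuous f :=
  latticeClosure_min (t := {f | Continuous f}) hA
    ⟨fun _ hf _ hg => hf.sup hg, fun _ hf _ hg => hf.inf hg⟩ hf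

theorem exists_seq_tendstoUniformlyOn_of_forall_exists_near {α : Type*} {S : Set (α → ℝ)}
    {u : α → ℝ} {K : Set α} (h : ∀ ε > 0, ∃ f ∈ S, ∀ z ∈ K, |f z - u z| < ε) :
    ∃ F : ℕ → α → ℝ, (∀ n, F n ∈ S) ∧ TendstoUniformlyOn F u atTop K := by
  choose F hFS hF using fun n : ℕ => h (1 / (n + 1)) Nat.one_div_pos_of_nat
  refine ⟨F, hFS, Metric.tendstoUniformlyOn_iff.2 fun ε hε => ?_⟩
  filter_upwards [tendsto_one_div_add_atTop_nhds_zero_nat.eventually (gt_mem_nhds hε)]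
    with n hn z hz
  rw [dist_comm, Real.dist_eq]
  exact (hF n z hz).trans hn

section KakutaniKrein

variable {X : Type*} [TopologicalSpace X] [CompactSpace X] [Nonempty X]
  {L : Set (X → ℝ)} {u : X → ℝ}

theorem exists_forall_lt_of_supClosed (hL : SupClosed L) (hcont : ∀ f ∈ L, Continuous f)
    (hu : Continuous u) (h : ∀ y, ∃ f ∈ L, u y < f y) : ∃ f ∈ L, ∀ x, u x < f x := by
  choose f hfL hf using h
  obtain ⟨s, hs⟩ := CompactSpace.elim_nhds_subcover (fun y => {x | u x < f y x})
    fun y => (isOpen_lt hu (hcont _ (hfL y))).mem_nhds (hf y)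
  have hne : s.Nonempty := nonempty_of_union_eq_top_of_nonempty _ _ inferInstance hs
  refine ⟨s.sup' hne f, hL.finsetSup'_mem hne fun y _ => hfL y, fun x => ?_⟩
  obtain ⟨y, hy, hxy⟩ := exists_set_mem_of_union_eq_top _ _ hs x
  rw [Finset.sup'_apply, Finset.lt_sup'_iff]
  exact ⟨y, hy, hxy⟩

theorem exists_forall_gt_of_infClosed (hL : InfClosed L) (hcont : ∀ f ∈ L, Continuous f)
    (hu : Continuous u) (h : ∀ y, ∃ f ∈ L, f y < u y) : ∃ f ∈ L, ∀ x, f x < u x := by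
  obtain ⟨f, hf, hfu⟩ := exists_forall_lt_of_supClosed (L := -L) (u := -u)
    (fun f hf g hg => by rw [Set.mem_neg, neg_sup]; exact hL hf hg)
    (fun f hf => by simpa using (hcont _ hf).neg) hu.neg fun y => by
      obtain ⟨f, hf, hfy⟩ := h y
      exact ⟨-f, by simpa using hf, by simpa using hfy⟩
  exact ⟨-f, hf, fun x => neg_lt.1 (by simpa using hfu x)⟩

theorem exists_mem_near_of_forall_near_two_points (hL : IsSublattice L)
    (hcont : ∀ f ∈ L, Continuous f) (hu : Continuous u) {ε : ℝ}
    (h : ∀ x y, ∃ f ∈ L, |f x - u x| < ε ∧ |f y - u y| < ε) :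
    ∃ f ∈ L, ∀ x, |f x - u x| < ε := by
  have upper (x : X) : ∃ f ∈ {f ∈ L | f x < u x + ε}, ∀ z, u z - ε < f z := by
    refine exists_forall_lt_of_supClosed
      (fun f hf g hg => ⟨hL.supClosed hf.1 hg.1, max_lt hf.2 hg.2⟩)
      (fun f hf => hcont f hf.1) (hu.sub continuous_const) fun y => ?_
    obtain ⟨f, hf, hfx, hfy⟩ := h x y
    exact ⟨f, ⟨hf, by linarith [(abs_lt.1 hfx).2]⟩, by linarith [(abs_lt.1 hfy).1]⟩
  obtain ⟨f, ⟨hfL, hf⟩, hfu⟩ := exists_forall_gt_of_infClosed (L := {f ∈ L | ∀ z, u z - ε < f z})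
    (u := fun z => u z + ε)
    (fun f hf g hg => ⟨hL.infClosed hf.1 hg.1, fun z => lt_min (hf.2 z) (hg.2 z)⟩)
    (fun f hf => hcont f hf.1) (hu.add continuous_const) fun x => by
      obtain ⟨f, ⟨hfL, hfx⟩, hf⟩ := upper x
      exact ⟨f, ⟨hfL, hf⟩, hfx⟩
  exact ⟨f, hfL, fun x => abs_lt.2 ⟨by linarith [hf x], by linarith [hfu x]⟩⟩

end KakutaniKrein

theorem isCompact_unitBox (k : ℕ) : IsCompact (unitBox k) := by
  convert isCompact_Icc (a := (0 : Fin k → ℝ)) (b := 1) using 1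
  ext z
  simp [unitBox, Pi.le_def, forall_and]

theorem exists_rat_mem_Icc_zero_one_mem_Ioc {t η : ℝ} (ht : t ∈ Icc (0 : ℝ) 1) (hη : 0 < η) :
    ∃ q : ℚ, (q : ℝ) ∈ Icc (0 : ℝ) 1 ∧ (q : ℝ) ∈ Ioc (t - η) t := by
  obtain ⟨q, hq₁, hq₂⟩ := exists_rat_btwn (show t - η < t by linarith)
  refine ⟨max q 0, ?_, ?_⟩ <;> push_cast
  · exact ⟨le_max_right _ _, max_le (hq₂.le.trans ht.2) zero_le_one⟩
  · exact ⟨lt_max_of_lt_left hq₁, max_le hq₂.le ht.1⟩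

theorem exists_rat_mem_unitBox_dist_lt {k : ℕ} {x : Fin k → ℝ} (hx : x ∈ unitBox k) {r : ℝ}
    (hr : 0 < r) : ∃ q : Fin k → ℚ, (fun i => (q i : ℝ)) ∈ unitBox k ∧
      dist x (fun i => (q i : ℝ)) < r := by
  choose q hq₁ hq₂ using fun i => exists_rat_mem_Icc_zero_one_mem_Ioc (hx i) hr
  refine ⟨q, hq₁, (dist_pi_lt_iff hr).2 fun i => ?_⟩
  rw [Real.dist_eq, abs_lt]
  constructor <;> linarith [(hq₂ i).1, (hq₂ i).2]

theorem exists_rat_pair_near {s t d η : ℝ} (hs : s ∈ Icc (0 : ℝ) 1) (ht : t ∈ Icc (0 : ℝ) 1)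
    (hst : s ≤ t) (htd : t ≤ s + d) (hd : 0 < d) (hη : 0 < η) :
    ∃ a b : ℚ, (a : ℝ) ∈ Icc (0 : ℝ) 1 ∧ (b : ℝ) ∈ Icc (0 : ℝ) 1 ∧ (a : ℝ) ≤ b ∧
      (b : ℝ) < a + d ∧ |(a : ℝ) - s| < η ∧ |(b : ℝ) - t| < η := by
  obtain ⟨a, ha, has, has'⟩ := exists_rat_mem_Icc_zero_one_mem_Ioc hs hη
  have has_abs : |(a : ℝ) - s| < η := abs_lt.2 ⟨by linarith, by linarith⟩
  rcases (has'.trans hst).lt_or_eq with hat | rfl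
  · obtain ⟨b, hb₁, hb₂⟩ := exists_rat_btwn (show max (a : ℝ) (t - η) < min t (a + d) from
      max_lt (lt_min hat (by linarith)) (lt_min (by linarith) (by linarith)))
    rw [max_lt_iff] at hb₁
    rw [lt_min_iff] at hb₂
    exact ⟨a, b, ha, ⟨ha.1.trans hb₁.1.le, hb₂.1.le.trans ht.2⟩, hb₁.1.le, hb₂.2, has_abs,
      abs_lt.2 ⟨by linarith, by linarith⟩⟩
  · exact ⟨a, a, ha, ha, le_rfl, by linarith, has_abs, by simpa using hη⟩

structure IsModulus {k : ℕ} (Δ : (Fin k → ℝ) → ℝ) : Prop where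
  continuousOn : ContinuousOn Δ {x | ∀ i, 0 ≤ x i}
  map_zero : Δ 0 = 0
  mono : ∀ x y : Fin k → ℝ, (∀ i, 0 ≤ x i) → (∀ i, x i ≤ y i) → Δ x ≤ Δ y
  add_le : ∀ x y : Fin k → ℝ, (∀ i, 0 ≤ x i) → (∀ i, 0 ≤ y i) → Δ (x + y) ≤ Δ x + Δ y

/-- `Δ(π(z̄ - w̄))`, the pseudometric induced by the modulus `Δ`. -/
def modulusDist {k : ℕ} (Δ : (Fin k → ℝ) → ℝ) (z w : Fin k → ℝ) : ℝ :=
  Δ fun i => |z i - w i|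

/-- The paper's `u_{a,b}^{x̄,ȳ}`. -/
noncomputable def basicFn {k : ℕ} (Δ : (Fin k → ℝ) → ℝ) (x y : Fin k → ℝ) (a b : ℝ)
    (z : Fin k → ℝ) : ℝ :=
  min 1 (a + (b - a) / modulusDist Δ y x * modulusDist Δ z x)

section

variable {k : ℕ} {Δ : (Fin k → ℝ) → ℝ}

theorem modulusDist_comm (z w : Fin k → ℝ) : modulusDist Δ z w = modulusDist Δ w z := by
  simp only [modulusDist, abs_sub_comm (z _)]

theorem basicFn_apply_right {x y : Fin k → ℝ} (hD : modulusDist Δ y x ≠ 0) (a : ℝ) {b : ℝ}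
    (hb : b ≤ 1) : basicFn Δ x y a b y = b := by
  rw [basicFn, div_mul_cancel₀ _ hD, add_sub_cancel, min_eq_right hb]

theorem countable_genSetQ (Δ : (Fin k → ℝ) → ℝ) : (genSetQ Δ).Countable := by
  refine ((countable_range fun p : (Fin k → ℚ) × (Fin k → ℚ) × ℚ × ℚ =>
      basicFn Δ (fun i => p.1 i) (fun i => p.2.1 i) p.2.2.1 p.2.2.2).union
    (countable_range fun q : ℚ => fun _ : Fin k → ℝ => (q : ℝ))).mono ?_
  rintro _ (⟨x, -, y, -, _, _, hx, hy, ⟨a, rfl⟩, ⟨b, rfl⟩, -, -, -, -, -, rfl⟩ |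
    ⟨_, -, ⟨a, rfl⟩, rfl⟩)
  · choose x' hx' using hx
    choose y' hy' using hy
    obtain rfl : x = fun i => (x' i : ℝ) := funext hx'
    obtain rfl : y = fun i => (y' i : ℝ) := funext hy'
    exact Or.inl ⟨(x', y', a, b), rfl⟩
  · exact Or.inr ⟨a, rfl⟩

namespace IsModulus

theorem nonneg (hΔ : IsModulus Δ) {x : Fin k → ℝ} (hx : ∀ i, 0 ≤ x i) : 0 ≤ Δ x :=
  hΔ.map_zero ▸ hΔ.mono 0 x (fun _ => le_rfl) hx

theorem modulusDist_nonneg (hΔ : IsModulus Δ) (z w : Fin k → ℝ) : 0 ≤ modulusDist Δ z w :=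
  hΔ.nonneg fun _ => abs_nonneg _

theorem modulusDist_self (hΔ : IsModulus Δ) (z : Fin k → ℝ) : modulusDist Δ z z = 0 := by
  simpa [modulusDist, ← Pi.zero_def] using hΔ.map_zero

theorem modulusDist_triangle (hΔ : IsModulus Δ) (x y z : Fin k → ℝ) :
    modulusDist Δ x z ≤ modulusDist Δ x y + modulusDist Δ y z :=
  (hΔ.mono _ _ (fun _ => abs_nonneg _) fun i => abs_sub_le (x i) (y i) (z i)).trans
    (hΔ.add_le _ _ (fun _ => abs_nonneg _) fun _ => abs_nonneg _)

theorem abs_modulusDist_sub_modulusDist_le (hΔ : IsModulus Δ) (z w x : Fin k → ℝ) :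
    |modulusDist Δ z x - modulusDist Δ w x| ≤ modulusDist Δ z w := by
  have h₁ := hΔ.modulusDist_triangle z w x
  have h₂ := hΔ.modulusDist_triangle w z x
  rw [modulusDist_comm w z] at h₂
  exact abs_sub_le_iff.2 ⟨by linarith, by linarith⟩

theorem continuous_modulusDist_left (hΔ : IsModulus Δ) (x : Fin k → ℝ) :
    Continuous fun z => modulusDist Δ z x :=
  hΔ.continuousOn.comp_continuous (by fun_prop) fun _ _ => abs_nonneg _

theorem exists_pos_forall_dist_lt_modulusDist_lt (hΔ : IsModulus Δ) {δ : ℝ} (hδ : 0 < δ) :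
    ∃ r > 0, ∀ z w, dist z w < r → modulusDist Δ z w < δ := by
  have hc : Continuous fun v : Fin k → ℝ => Δ fun i => |v i| :=
    hΔ.continuousOn.comp_continuous (by fun_prop) fun _ _ => abs_nonneg _
  obtain ⟨r, hr, hball⟩ := Metric.continuousAt_iff.1 hc.continuousAt δ hδ
  refine ⟨r, hr, fun z w hzw => ?_⟩
  have := hball (x := z - w) (by rwa [dist_zero_right, ← dist_eq_norm])
  simp only [Pi.sub_apply, Pi.zero_apply, abs_zero, ← Pi.zero_def, hΔ.map_zero, Real.dist_eq,
    sub_zero] at this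
  exact (le_abs_self _).trans_lt this

theorem uniformContinuousOn_of_abs_sub_le_modulusDist (hΔ : IsModulus Δ)
    {s : Set (Fin k → ℝ)} {u : (Fin k → ℝ) → ℝ}
    (hu : ∀ z ∈ s, ∀ w ∈ s, |u z - u w| ≤ modulusDist Δ z w) : UniformContinuousOn u s := by
  refine Metric.uniformContinuousOn_iff.2 fun ε hε => ?_
  obtain ⟨r, hr, hsmall⟩ := hΔ.exists_pos_forall_dist_lt_modulusDist_lt hε
  exact ⟨r, hr, fun z hz w hw hzw => (hu z hz w hw).trans_lt (hsmall z w hzw)⟩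

theorem basicFn_apply_left (hΔ : IsModulus Δ) {x y : Fin k → ℝ} {a : ℝ} (b : ℝ) (ha : a ≤ 1) :
    basicFn Δ x y a b x = a := by
  simp [basicFn, hΔ.modulusDist_self, ha]

theorem abs_basicFn_sub_basicFn_le (hΔ : IsModulus Δ) {x y : Fin k → ℝ} {a b : ℝ} (hab : a ≤ b)
    (hbD : b - a ≤ modulusDist Δ y x) (z w : Fin k → ℝ) :
    |basicFn Δ x y a b z - basicFn Δ x y a b w| ≤ modulusDist Δ z w := by
  have hba : 0 ≤ b - a := sub_nonneg.2 hab
  set c := (b - a) / modulusDist Δ y x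
  have hc₀ : 0 ≤ c := div_nonneg hba (hba.trans hbD)
  have hc₁ : c ≤ 1 := div_le_one_of_le₀ hbD (hba.trans hbD)
  calc |basicFn Δ x y a b z - basicFn Δ x y a b w|
      ≤ |(a + c * modulusDist Δ z x) - (a + c * modulusDist Δ w x)| := by
        have := abs_min_sub_min_le_max 1 (a + c * modulusDist Δ z x) 1
          (a + c * modulusDist Δ w x)
        rwa [sub_self, abs_zero, max_eq_right (abs_nonneg _)] at this
    _ = c * |modulusDist Δ z x - modulusDist Δ w x| := by
        rw [add_sub_add_left_eq_sub, ← mul_sub, abs_mul, abs_of_nonneg hc₀]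
    _ ≤ 1 * modulusDist Δ z w :=
        mul_le_mul hc₁ (hΔ.abs_modulusDist_sub_modulusDist_le z w x) (abs_nonneg _) zero_le_one
    _ = modulusDist Δ z w := one_mul _

theorem continuous_of_mem_genSetQ (hΔ : IsModulus Δ) {g : (Fin k → ℝ) → ℝ}
    (hg : g ∈ genSetQ Δ) : Continuous g := by
  rcases hg with ⟨x, -, y, -, a, b, -, -, -, -, -, -, -, -, -, rfl⟩ | ⟨a, -, -, rfl⟩
  · exact continuous_const.min
      (continuous_const.add (continuous_const.mul (hΔ.continuous_modulusDist_left x)))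
  · exact continuous_const

theorem exists_mem_genSetQ_near_of_modulusDist_pos (hΔ : IsModulus Δ) {x y : Fin k → ℝ}
    (hx : x ∈ unitBox k) (hy : y ∈ unitBox k) (hD : 0 < modulusDist Δ y x) {s t : ℝ}
    (hs : s ∈ Icc (0 : ℝ) 1) (ht : t ∈ Icc (0 : ℝ) 1) (hst : s ≤ t)
    (htD : t - s ≤ modulusDist Δ y x) {ε : ℝ} (hε : 0 < ε) :
    ∃ g ∈ genSetQ Δ, |g x - s| < ε ∧ |g y - t| < ε := by
  set δ := min (ε / 4) (modulusDist Δ y x / 3)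
  have hδ : 0 < δ := lt_min (by linarith) (by linarith)
  have hδε : δ ≤ ε / 4 := min_le_left _ _
  have hδD : δ ≤ modulusDist Δ y x / 3 := min_le_right _ _
  obtain ⟨r, hr, hsmall⟩ := hΔ.exists_pos_forall_dist_lt_modulusDist_lt hδ
  obtain ⟨p, hp, hxp⟩ := exists_rat_mem_unitBox_dist_lt hx hr
  obtain ⟨q, hq, hyq⟩ := exists_rat_mem_unitBox_dist_lt hy hr
  set x₀ : Fin k → ℝ := fun i => (p i : ℝ)
  set y₀ : Fin k → ℝ := fun i => (q i : ℝ)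
  have hxx₀ := hsmall _ _ hxp
  have hyy₀ := hsmall _ _ hyq
  have hD₀ : modulusDist Δ y x ≤
      modulusDist Δ y y₀ + modulusDist Δ y₀ x₀ + modulusDist Δ x x₀ := by
    have h₁ := hΔ.modulusDist_triangle y y₀ x
    have h₂ := hΔ.modulusDist_triangle y₀ x₀ x
    rw [modulusDist_comm x₀] at h₂
    linarith
  have hD₀pos : 0 < modulusDist Δ y₀ x₀ := by linarith
  -- the target value at `y₀` is pulled below `s + Δ(π(y₀ - x₀))`, costing at most `2δ`
  set t₀ := min t (s + modulusDist Δ y₀ x₀)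
  have ht₀ : t - 2 * δ ≤ t₀ := le_min (by linarith) (by linarith)
  have ht₀t : t₀ ≤ t := min_le_left _ _
  have hst₀ : s ≤ t₀ := le_min hst (by linarith)
  obtain ⟨a, b, ha, hb, hab, hbD, has, hbt⟩ := exists_rat_pair_near hs
    ⟨hs.1.trans hst₀, ht₀t.trans ht.2⟩ hst₀ (min_le_right _ _) hD₀pos
    (by linarith : 0 < ε / 4)
  have hlip := hΔ.abs_basicFn_sub_basicFn_le hab (by linarith)
  have hgx := abs_le.1 (hlip x x₀)
  have hgy := abs_le.1 (hlip y y₀)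
  rw [hΔ.basicFn_apply_left _ ha.2] at hgx
  rw [basicFn_apply_right hD₀pos.ne' _ hb.2] at hgy
  refine ⟨basicFn Δ x₀ y₀ a b, Or.inl ⟨x₀, hp, y₀, hq, a, b, fun i => ⟨p i, rfl⟩,
    fun i => ⟨q i, rfl⟩, ⟨a, rfl⟩, ⟨b, rfl⟩, ha, hb, hab, hD₀pos, hbD, rfl⟩, ?_, ?_⟩ <;>
    rw [abs_lt] at has hbt ⊢ <;> constructor <;> linarith

theorem exists_mem_genSetQ_near_two_points (hΔ : IsModulus Δ) {x y : Fin k → ℝ}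
    (hx : x ∈ unitBox k) (hy : y ∈ unitBox k) {s t : ℝ} (hs : s ∈ Icc (0 : ℝ) 1)
    (ht : t ∈ Icc (0 : ℝ) 1) (hst : |t - s| ≤ modulusDist Δ y x) {ε : ℝ} (hε : 0 < ε) :
    ∃ g ∈ genSetQ Δ, |g x - s| < ε ∧ |g y - t| < ε := by
  wlog hle : s ≤ t generalizing x y s t
  · obtain ⟨g, hg, hgy, hgx⟩ :=
      this hy hx ht hs (by rwa [abs_sub_comm, modulusDist_comm]) (le_of_not_ge hle)
    exact ⟨g, hg, hgx, hgy⟩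
  rcases (hΔ.modulusDist_nonneg y x).eq_or_lt with hD | hD
  · obtain ⟨q, hq, hqs⟩ := exists_rat_mem_Icc_zero_one_mem_Ioc hs hε
    obtain rfl : t = s := sub_eq_zero.1 (abs_nonpos_iff.1 (hst.trans hD.ge))
    have hqt : |(q : ℝ) - t| < ε := abs_lt.2 ⟨by linarith [hqs.1], by linarith [hqs.2]⟩
    exact ⟨fun _ => q, Or.inr ⟨q, hq, ⟨q, rfl⟩, rfl⟩, hqt, hqt⟩
  · exact hΔ.exists_mem_genSetQ_near_of_modulusDist_pos hx hy hD hs ht hle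
      ((le_abs_self _).trans hst) hε

theorem exists_mem_latticeClosure_genSetQ_near (hΔ : IsModulus Δ) {u : (Fin k → ℝ) → ℝ}
    (hu : ∀ z ∈ unitBox k, u z ∈ Icc (0 : ℝ) 1)
    (huΔ : ∀ z ∈ unitBox k, ∀ w ∈ unitBox k, |u z - u w| ≤ modulusDist Δ z w)
    {ε : ℝ} (hε : 0 < ε) :
    ∃ f ∈ latticeClosure (genSetQ Δ), ∀ z ∈ unitBox k, |f z - u z| < ε := by
  have : CompactSpace (unitBox k) := isCompact_iff_compactSpace.1 (isCompact_unitBox k)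
  have : Nonempty (unitBox k) := ⟨⟨0, fun _ => by simp⟩⟩
  have hcontL : ∀ g ∈ (unitBox k).domRestrict '' genSetQ Δ, Continuous g := by
    rintro _ ⟨g, hg, rfl⟩
    exact (hΔ.continuous_of_mem_genSetQ hg).comp continuous_subtype_val
  obtain ⟨f, hf, hfu⟩ := exists_mem_near_of_forall_near_two_points
    (L := latticeClosure ((unitBox k).domRestrict '' genSetQ Δ)) isSublattice_latticeClosure
    (fun f hf => continuous_of_mem_latticeClosure hcontL hf)
    (hΔ.uniformContinuousOn_of_abs_sub_le_modulusDist huΔ).continuousOn.domRestrict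
    fun x y => by
      obtain ⟨g, hg, hgx, hgy⟩ := hΔ.exists_mem_genSetQ_near_two_points x.2 y.2
        (hu x x.2) (hu y y.2) (huΔ y y.2 x x.2) hε
      exact ⟨_, subset_latticeClosure (mem_image_of_mem _ hg), hgx, hgy⟩
  rw [← image_latticeClosure _ _ (fun _ _ => rfl) fun _ _ => rfl] at hf
  obtain ⟨g, hg, rfl⟩ := hf
  exact ⟨g, hg, fun z hz => hfu ⟨z, hz⟩⟩

end IsModulus

end

theorem stmt_12_general {k : ℕ} (Δ : (Fin k → ℝ) → ℝ)
    (hcont : ContinuousOn Δ {x | ∀ i, 0 ≤ x i})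
    (hmono : ∀ x y : Fin k → ℝ, (∀ i, 0 ≤ x i) → (∀ i, x i ≤ y i) → Δ x ≤ Δ y)
    (hsub : ∀ x y : Fin k → ℝ, (∀ i, 0 ≤ x i) → (∀ i, 0 ≤ y i) → Δ (x + y) ≤ Δ x + Δ y)
    (h0 : Δ 0 = 0)
    (u : (Fin k → ℝ) → ℝ)
    (hu : ∀ z ∈ unitBox k, u z ∈ Set.Icc (0 : ℝ) 1)
    (huresp : ∀ z ∈ unitBox k, ∀ w ∈ unitBox k, |u z - u w| ≤ Δ (fun i => |z i - w i|)) :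
    (latticeGen (genSetQ Δ)).Countable ∧
    ∃ F : ℕ → ((Fin k → ℝ) → ℝ), (∀ m, F m ∈ latticeGen (genSetQ Δ)) ∧
      TendstoUniformlyOn F u Filter.atTop (unitBox k) := by
  have hΔ : IsModulus Δ := ⟨hcont, h0, hmono, hsub⟩
  rw [latticeGen_eq_latticeClosure]
  exact ⟨(countable_genSetQ Δ).latticeClosure,
    exists_seq_tendstoUniformlyOn_of_forall_exists_near fun ε hε =>
      hΔ.exists_mem_latticeClosure_genSetQ_near hu huresp hε⟩

theorem stmt_12 {k : ℕ} (Δ : (Fin k → ℝ) → ℝ)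
    (hcont : ContinuousOn Δ {x | ∀ i, 0 ≤ x i})
    (hnn : ∀ x : Fin k → ℝ, (∀ i, 0 ≤ x i) → 0 ≤ Δ x)
    (hmono : ∀ x y : Fin k → ℝ, (∀ i, 0 ≤ x i) → (∀ i, x i ≤ y i) → Δ x ≤ Δ y)
    (hsub : ∀ x y : Fin k → ℝ, (∀ i, 0 ≤ x i) → (∀ i, 0 ≤ y i) → Δ (x + y) ≤ Δ x + Δ y)
    (h0 : Δ 0 = 0)
    (hΔ1 : ∀ x ∈ unitBox k, Δ x ≤ 1)
    (u : (Fin k → ℝ) → ℝ)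
    (hu : ∀ z ∈ unitBox k, u z ∈ Set.Icc (0 : ℝ) 1)
    (huresp : ∀ z ∈ unitBox k, ∀ w ∈ unitBox k, |u z - u w| ≤ Δ (fun i => |z i - w i|)) :
    (latticeGen (genSetQ Δ)).Countable ∧
    ∃ F : ℕ → ((Fin k → ℝ) → ℝ), (∀ m, F m ∈ latticeGen (genSetQ Δ)) ∧
      TendstoUniformlyOn F u Filter.atTop (unitBox k) :=
  stmt_12_general Δ hcont hmono hsub h0 u hu huresp
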